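/- arXiv:math/9905004 — 2 statements merged into one kernel-verified Lean document; each statement's English description precedes it below -/
import Mathlib

section
/- For φ(x) = x^r with r ∈ (1, ∞) and x > 0, for every integer k > 1 one has |φ^{(k)}(x) / (k! φ'(x))|^{1/(k−1)} ≤ ⌈r⌉ / x. -/
/-!
Since `φ⁽ᵏ⁾(x) = r (r - 1) ⋯ (r - k + 1) x ^ (r - k)`, the quotient `φ⁽ᵏ⁾(x) / (k! φ'(x))` equals
`(r - 1) ⋯ (r - k + 1) / (k! x ^ (k - 1))`. For `r > 0` and `j ≥ 1` each factor satisfies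
`|r - j| ≤ max r j ≤ ⌈r⌉ j`, so the quotient is at most `⌈r⌉ ^ (k - 1) (k - 1)! / k!` times
`x ^ (1 - k)`, which is below `(⌈r⌉ / x) ^ (k - 1)`.
-/

open Real Polynomial Nat

lemma abs_sub_natCast_le_ceil_mul {r : ℝ} (hr : 0 < r) {j : ℕ} (hj : 1 ≤ j) :
    |r - j| ≤ ⌈r⌉ * j := by
  have hceil : r ≤ ⌈r⌉ := Int.le_ceil r
  have hceil_one : (1 : ℝ) ≤ ⌈r⌉ := by exact_mod_cast Int.one_le_ceil_iff.2 hr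
  have hj' : (1 : ℝ) ≤ j := by exact_mod_cast hj
  rw [abs_le]
  constructor <;> nlinarith

lemma abs_descPochhammer_eval_sub_one_le {r : ℝ} (hr : 0 < r) (m : ℕ) :
    |(descPochhammer ℝ m).eval (r - 1)| ≤ ⌈r⌉ ^ m * m ! := by
  rw [descPochhammer_eval_eq_prod_range, Finset.abs_prod, ← Finset.prod_range_add_one_eq_factorial,
    Nat.cast_prod, ← Finset.card_range m, ← Finset.prod_const, Finset.card_range,
    ← Finset.prod_mul_distrib]
  refine Finset.prod_le_prod (fun _ _ => abs_nonneg _) fun j _ => ?_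
  rw [sub_sub, add_comm 1 (j : ℝ), ← Nat.cast_add_one]
  exact abs_sub_natCast_le_ceil_mul hr (Nat.le_add_left 1 j)

lemma iteratedDeriv_succ_rpow_div_deriv {r x : ℝ} (hr : r ≠ 0) (hx : 0 < x) (m : ℕ) :
    iteratedDeriv (m + 1) (fun t : ℝ => t ^ r) x / deriv (fun t : ℝ => t ^ r) x =
      (descPochhammer ℝ m).eval (r - 1) / x ^ m := by
  have hsplit : x ^ (r - (m + 1 : ℕ)) = x ^ (r - 1) / x ^ m := by
    rw [← rpow_natCast, ← rpow_sub hx]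
    push_cast
    ring_nf
  rw [iteratedDeriv_eq_iterate, iter_deriv_rpow_const, Real.deriv_rpow_const,
    descPochhammer_succ_left, eval_mul, eval_X, eval_comp, eval_sub, eval_X, eval_one, hsplit]
  have hpos : 0 < x ^ (r - 1) := rpow_pos_of_pos hx _
  field_simp

lemma abs_iteratedDeriv_succ_rpow_div_le {r x : ℝ} (hr : 0 < r) (hx : 0 < x) (m : ℕ) :
    |iteratedDeriv (m + 1) (fun t : ℝ => t ^ r) x /
        (((m + 1) ! : ℕ) * deriv (fun t : ℝ => t ^ r) x)| ≤ (⌈r⌉ / x) ^ m := by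
  have hfac : (m ! : ℝ) ≤ (m + 1) ! := by exact_mod_cast Nat.factorial_le m.le_succ
  have hceil : (0 : ℝ) ≤ ⌈r⌉ ^ m := pow_nonneg (by exact_mod_cast (Int.ceil_pos.2 hr).le) m
  rw [div_mul_eq_div_div_swap, iteratedDeriv_succ_rpow_div_deriv hr.ne' hx, div_pow,
    abs_div, abs_div, abs_of_pos (pow_pos hx m), Nat.abs_cast, div_right_comm]
  gcongr
  calc |(descPochhammer ℝ m).eval (r - 1)| / ((m + 1) ! : ℕ)
      ≤ ⌈r⌉ ^ m * m ! / (m + 1) ! := by gcongr; exact abs_descPochhammer_eval_sub_one_le hr m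
    _ ≤ ⌈r⌉ ^ m := by
      rw [div_le_iff₀ (by positivity)]
      exact mul_le_mul_of_nonneg_left hfac hceil

/-- Gamma-theory bound for `φ(x) = x^r`, `r > 1`: for all `k > 1` and `x > 0`,
`|φ⁽ᵏ⁾(x)/(k! φ'(x))|^{1/(k−1)} ≤ ⌈r⌉/x`. -/
theorem gamma_bound_rpow_gt_one (r : ℝ) (hr : 1 < r) (x : ℝ) (hx : 0 < x)
    (k : ℕ) (hk : 1 < k) :
    |iteratedDeriv k (fun t : ℝ => t ^ r) x /
        ((k.factorial : ℝ) * deriv (fun t : ℝ => t ^ r) x)| ^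
      ((1 : ℝ) / ((k : ℝ) - 1)) ≤ (⌈r⌉ : ℝ) / x := by
  obtain ⟨m, rfl⟩ : ∃ m, k = m + 1 := ⟨k - 1, by omega⟩
  have hm : (0 : ℝ) < m := by exact_mod_cast Nat.succ_lt_succ_iff.1 hk
  have hr0 : 0 < r := zero_lt_one.trans hr
  rw [Nat.cast_add_one, add_sub_cancel_right, one_div,
    rpow_inv_le_iff_of_pos (abs_nonneg _) (div_pos (by exact_mod_cast Int.ceil_pos.2 hr0) hx).le hm,
    rpow_natCast]
  exact abs_iteratedDeriv_succ_rpow_div_le hr0 hx m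
end

section
/- Let A be an n×n integer matrix with nonzero determinant, and let c₁, …, cₙ be nonzero complex numbers. Then the system of binomial equations x₁^{a_{i1}} ⋯ xₙ^{a_{in}} = c_i (i = 1, …, n) has exactly |det A| solutions in the complex torus (ℂ*)ⁿ. -/
/-!
The monomial map `x ↦ (∏ⱼ xⱼ ^ aᵢⱼ)ᵢ` is an endomorphism of the torus `(ℂˣ)ⁿ`, and the solutions
form one of its fibres. It is surjective, because precomposing it with the monomial map of
`adj A` gives `x ↦ x ^ det A` and `ℂˣ` is divisible; hence every fibre is a coset of the kernel.
The kernel is the group of characters of `ℤⁿ` that are trivial on the lattice `Λ` spanned by the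
rows of `A`, i.e. the character group of the finite group `ℤⁿ ⧸ Λ`, which has `|det A|` elements.
-/

open Matrix Set

lemma IsAlgClosed.units_zpow_surjective {K : Type*} [Field K] [IsAlgClosed K] {d : ℤ}
    (hd : d ≠ 0) : Function.Surjective fun u : Kˣ ↦ u ^ d := by
  have npow_surjective (m : ℕ) (hm : m ≠ 0) : Function.Surjective fun u : Kˣ ↦ u ^ m := by
    intro z
    obtain ⟨w, hw⟩ := IsAlgClosed.exists_pow_nat_eq (z : K) (Nat.pos_of_ne_zero hm)
    have hw₀ : w ≠ 0 := by
      rintro rfl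
      exact z.ne_zero (by simpa [hm] using hw.symm)
    exact ⟨Units.mk0 w hw₀, Units.ext hw⟩
  intro z
  obtain ⟨m, rfl | rfl⟩ := Int.eq_nat_or_neg d
  · obtain ⟨u, hu⟩ := npow_surjective m (by simpa using hd) z
    exact ⟨u, by simpa using hu⟩
  · obtain ⟨u, hu⟩ := npow_surjective m (by simpa using hd) z⁻¹
    exact ⟨u, by simp [hu]⟩

lemma Matrix.card_quotient_closure_range {ι : Type*} [Fintype ι] [DecidableEq ι]
    (A : Matrix ι ι ℤ) (hA : A.det ≠ 0) :
    Nat.card ((ι → ℤ) ⧸ AddSubgroup.closure (range A)) = A.det.natAbs := by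
  have hli := linearIndependent_rows_of_det_ne_zero hA
  let b := (Module.Basis.span hli).map
    (LinearEquiv.ofEq _ _ (AddSubgroup.toIntSubmodule_closure (range A)).symm)
  have hb (i : ι) : (b i : ι → ℤ) = A i := congrArg Subtype.val (Module.Basis.span_apply hli i)
  rw [← AddSubgroup.index, AddSubgroup.index_eq_natAbs_det (Pi.basisFun ℤ ι) _ b,
    Pi.basisFun_det_apply]
  congr 3
  exact funext hb

section MonomialMap

variable {ι κ μ G : Type*} [Fintype ι] [CommGroup G]

def Matrix.monomialMap (A : Matrix κ ι ℤ) : (ι → G) →* (κ → G) where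
  toFun x i := ∏ j, x j ^ A i j
  map_one' := by ext; simp
  map_mul' x y := by ext; simp [mul_zpow, Finset.prod_mul_distrib]

@[simp]
lemma Matrix.monomialMap_apply (A : Matrix κ ι ℤ) (x : ι → G) (i : κ) :
    A.monomialMap x i = ∏ j, x j ^ A i j := rfl

lemma Matrix.monomialMap_mul [Fintype μ] (A : Matrix κ μ ℤ) (B : Matrix μ ι ℤ) :
    (A * B).monomialMap (G := G) = A.monomialMap.comp B.monomialMap := by
  have zpow_sum (g : G) (f : μ → ℤ) : g ^ (∑ k, f k) = ∏ k, g ^ f k := by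
    simpa [← ofAdd_sum] using map_prod (zpowersHom G g) (fun k ↦ .ofAdd (f k)) Finset.univ
  ext x i
  simp only [monomialMap_apply, MonoidHom.coe_comp, Function.comp_apply, mul_apply, zpow_sum,
    ← Finset.prod_zpow]
  rw [Finset.prod_comm]
  refine Finset.prod_congr rfl fun k _ ↦ Finset.prod_congr rfl fun j _ ↦ ?_
  rw [mul_comm, _root_.zpow_mul]

lemma Matrix.monomialMap_smul_one [DecidableEq ι] (d : ℤ) (x : ι → G) :
    (d • (1 : Matrix ι ι ℤ)).monomialMap x = x ^ d := by
  ext i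
  rw [monomialMap_apply, Finset.prod_eq_single i (fun j _ hj ↦ by simp [hj.symm]) (by simp)]
  simp

lemma Matrix.monomialMap_surjective [DecidableEq ι] (A : Matrix ι ι ℤ)
    (h : Function.Surjective fun g : G ↦ g ^ A.det) :
    Function.Surjective (A.monomialMap (G := G)) := by
  intro c
  choose y hy using fun i ↦ h (c i)
  refine ⟨A.adjugate.monomialMap y, ?_⟩
  rw [← MonoidHom.comp_apply, ← monomialMap_mul, mul_adjugate, monomialMap_smul_one]
  exact funext hy

noncomputable def monomialCharEquiv : (ι → G) ≃ ((ι → ℤ) →+ Additive G) :=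
  (Equiv.piCongrRight fun _ ↦ Additive.ofMul).trans <|
    ((Pi.basisFun ℤ ι).constr ℤ).toEquiv.trans (addMonoidHomLequivInt ℤ).symm.toEquiv

lemma monomialCharEquiv_apply (x : ι → G) (v : ι → ℤ) :
    monomialCharEquiv x v = Additive.ofMul (∏ j, x j ^ v j) := by
  simp [monomialCharEquiv, addMonoidHomLequivInt, Module.Basis.constr_apply_fintype]

lemma Matrix.monomialMap_eq_one_iff (A : Matrix κ ι ℤ) (x : ι → G) :
    A.monomialMap x = 1 ↔ AddSubgroup.closure (range A) ≤ (monomialCharEquiv x).ker := by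
  rw [AddSubgroup.closure_le, funext_iff]
  refine (forall_congr' fun i ↦ ?_).trans range_subset_iff.symm
  rw [SetLike.mem_coe, AddMonoidHom.mem_ker, monomialCharEquiv_apply, ofMul_eq_zero]
  rfl

noncomputable def Matrix.kerMonomialMapEquiv (A : Matrix κ ι ℤ) :
    (A.monomialMap (G := G)).ker ≃
      (Multiplicative ((ι → ℤ) ⧸ AddSubgroup.closure (range A)) →* G) :=
  (monomialCharEquiv.subtypeEquiv fun x ↦ by
      rw [MonoidHom.mem_ker, monomialMap_eq_one_iff, AddMonoidHom.mem_ker,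
        AddMonoidHom.domRestrictHom_apply, AddMonoidHom.domRestrict_eq_zero_iff]
      rfl).trans <|
    (AddMonoidHom.domRestrictHomKerEquiv _ _).toEquiv.trans AddMonoidHom.toMultiplicativeLeft

lemma Matrix.card_ker_monomialMap_units {K : Type*} [Field K] [IsAlgClosed K] [CharZero K]
    (A : Matrix κ ι ℤ) [Finite ((ι → ℤ) ⧸ AddSubgroup.closure (range A))] :
    Nat.card (A.monomialMap (G := Kˣ)).ker =
      Nat.card ((ι → ℤ) ⧸ AddSubgroup.closure (range A)) := by
  have : NeZero (Monoid.exponent (Multiplicative ((ι → ℤ) ⧸ AddSubgroup.closure (range A)))) :=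
    ⟨Monoid.exponent_ne_zero_of_finite⟩
  rw [Nat.card_congr A.kerMonomialMapEquiv, CommGroup.card_monoidHom_of_hasEnoughRootsOfUnity]
  rfl

end MonomialMap

/-- A binomial system `∏ⱼ xⱼ^{aᵢⱼ} = cᵢ` with integer exponent matrix `A` of
nonzero determinant and nonzero constants `cᵢ` has exactly `|det A|` solutions
in the complex torus `(ℂ*)ⁿ`. -/
theorem binomial_system_torus_count (n : ℕ)
    (A : Matrix (Fin n) (Fin n) ℤ) (hA : A.det ≠ 0) (c : Fin n → ℂˣ) :
    {x : Fin n → ℂˣ | ∀ i, ∏ j, x j ^ A i j = c i}.ncard = A.det.natAbs := by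
  have hsolutions : {x : Fin n → ℂˣ | ∀ i, ∏ j, x j ^ A i j = c i} = A.monomialMap ⁻¹' {c} := by
    ext x
    simp [funext_iff]
  have hquotient := A.card_quotient_closure_range hA
  have : Finite ((Fin n → ℤ) ⧸ AddSubgroup.closure (range A)) :=
    Nat.finite_of_card_ne_zero (hquotient ▸ Int.natAbs_ne_zero.mpr hA)
  have hsurj := A.monomialMap_surjective (IsAlgClosed.units_zpow_surjective (K := ℂ) hA)
  rw [hsolutions, ← Nat.card_coe_set_eq,
    Nat.card_congr (MonoidHom.fiberEquivKerOfSurjective hsurj c), A.card_ker_monomialMap_units,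
    hquotient]
end
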